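/- arXiv:0907.3253 — 6 statements merged into one kernel-verified Lean document; each statement's English description precedes it below -/
import Mathlib

section
/- (Hochster's criterion) The toric ring K[A] is normal if and only if every ratio M_1/M_2 of monomials of K[A] such that some positive power (M_1/M_2)^m lies in K[A] itself lies in K[A]. -/
open scoped BigOperators

section Semigroup
variable {σ : Type*} [Fintype σ]

/-- Cast an exponent vector to an integer vector. -/
def vecZ (v : σ → ℕ) : σ → ℤ := fun i => (v i : ℤ)

/-- Cast an integer vector to a rational vector. -/
def vecQ (v : σ → ℤ) : σ → ℚ := fun i => (v i : ℚ)

/-- The affine semigroup `ℤ_{≥0}{a_1,…,a_n}` generated by a set of exponent vectors. -/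
def nnSpan (S : Set (σ → ℕ)) : AddSubmonoid (σ → ℤ) := AddSubmonoid.closure (vecZ '' S)

/-- The group `ℤ{a_1,…,a_n}` generated by a set of exponent vectors. -/
def zSpan (S : Set (σ → ℕ)) : AddSubgroup (σ → ℤ) := AddSubgroup.closure (vecZ '' S)

/-- The rational cone `ℚ_{≥0}{a_1,…,a_n}` (integer points thereof). -/
def qCone (S : Set (σ → ℕ)) : Set (σ → ℤ) :=
  {v | ∃ (n : ℕ) (f : Fin n → (σ → ℕ)) (c : Fin n → ℚ),
    (∀ k, f k ∈ S) ∧ (∀ k, 0 ≤ c k) ∧ vecQ v = ∑ k, c k • vecQ (vecZ (f k))}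

/-- Normality of the affine semigroup generated by `S`:
`ℤ_{≥0} S = ℤ S ∩ ℚ_{≥0} S`. -/
def IsNormalCfg (S : Set (σ → ℕ)) : Prop :=
  ∀ v : σ → ℤ, v ∈ zSpan S → v ∈ qCone S → v ∈ nnSpan S

/-- Very ampleness: `(ℤ S ∩ ℚ_{≥0} S) \ ℤ_{≥0} S` is a finite set. -/
def IsVeryAmpleCfg (S : Set (σ → ℕ)) : Prop :=
  (((zSpan S : Set (σ → ℤ)) ∩ qCone S) \ (nnSpan S : Set (σ → ℤ))).Finite

/-- A configuration: a finite set of exponent vectors lying on a common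
affine hyperplane `w · x = 1`. -/
def IsConfiguration (S : Set (σ → ℕ)) : Prop :=
  S.Finite ∧ ∃ w : σ → ℚ, ∀ v ∈ S, ∑ i, w i * (v i : ℚ) = 1

end Semigroup

/-!
A divisibility `t^y ∣ t^x` between monomials of `K[S]` forces `x - y ∈ S`, so normality of `K[S]`
gives root closedness of `S` through `a ^ m ∣ b ^ m → a ∣ b`.

Conversely, an element `p / q` integral over `K[S]` is almost integral: for one `c ≠ 0`,
`q ^ k ∣ c * p ^ k` for all `k`, say `c * p ^ k = q ^ k * r k`. Comparing lex-leading exponents,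
`deg c + k • deg p = k • deg q + deg (r k)` with `deg (r k) ∈ S`; Dickson's lemma on the
coefficients of the `deg (r k)` over finitely many generators gives `i < j` with
`deg (r j) - deg (r i) ∈ S`, i.e. `(j - i) • (deg p - deg q) ∈ S`, so `deg p - deg q ∈ S`.
Subtracting the matching monomial multiple of `q` from `p` lowers the leading exponent and keeps
`p` almost integral, and induction on the lex order gives `q ∣ p`.
-/

open MvPolynomial

namespace AddSubmonoid

variable {M : Type*} [AddCommMonoid M]

/-- Root closedness of `S` in its group of differences, phrased inside `M`: if a positive
multiple of `x - y` lies in `S`, so does `x - y`. -/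
def IsRootClosed (S : AddSubmonoid M) : Prop :=
  ∀ ⦃x y : M⦄, x ∈ S → y ∈ S → ∀ ⦃m : ℕ⦄, m ≠ 0 →
    (∃ s ∈ S, m • x = m • y + s) → ∃ s ∈ S, x = y + s

theorem isRootClosed_iff_map {G : Type*} [AddCommGroup G] {φ : M →+ G}
    (hφ : Function.Injective φ) (S : AddSubmonoid M) :
    S.IsRootClosed ↔ ∀ b₁ ∈ S.map φ, ∀ b₂ ∈ S.map φ,
      (∃ m : ℕ, 0 < m ∧ (m : ℤ) • (b₁ - b₂) ∈ S.map φ) → b₁ - b₂ ∈ S.map φ := by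
  have key (m : ℕ) (x y s : M) : (m : ℤ) • (φ x - φ y) = φ s ↔ m • x = m • y + s := by
    rw [natCast_zsmul, smul_sub, sub_eq_iff_eq_add', ← map_nsmul, ← map_nsmul, ← map_add,
      hφ.eq_iff]
  constructor
  · rintro hS _ ⟨x, hx, rfl⟩ _ ⟨y, hy, rfl⟩ ⟨m, hm, s, hs, hsm⟩
    obtain ⟨e, he, rfl⟩ := hS hx hy hm.ne' ⟨s, hs, (key m x y s).mp hsm.symm⟩
    exact ⟨e, he, by rw [map_add, add_sub_cancel_left]⟩
  · rintro hS x y hx hy m hm ⟨s, hs, hxy⟩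
    obtain ⟨e, he, hφe⟩ := hS _ (mem_map_of_mem φ hx) _ (mem_map_of_mem φ hy)
      ⟨m, Nat.pos_of_ne_zero hm, s, hs, ((key m x y s).mpr hxy).symm⟩
    exact ⟨e, he, hφ (by rw [map_add, hφe, add_sub_cancel])⟩

theorem FG.exists_lt_add_mem {S : AddSubmonoid M} (hS : S.FG) {f : ℕ → M}
    (hf : ∀ k, f k ∈ S) : ∃ i j, i < j ∧ ∃ s ∈ S, f j = f i + s := by
  obtain ⟨t, rfl⟩ := hS
  choose c hc using fun k => mem_closure_finset'.mp (hf k)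
  -- Dickson's lemma on the coefficient vectors `c k : t → ℕ`
  obtain ⟨i, j, hij, hle⟩ := wellQuasiOrdered_le c
  refine ⟨i, j, hij, ∑ u : t, (c j u - c i u) • (u : M),
    _root_.sum_mem fun u _ => nsmul_mem (subset_closure u.2) _, ?_⟩
  rw [hc i, hc j, ← Finset.sum_add_distrib]
  refine Finset.sum_congr rfl fun u _ => ?_
  rw [← add_smul, Nat.add_sub_cancel' (hle u)]

end AddSubmonoid

theorem pow_dvd_mul_sub_mul_pow {R : Type*} [CommRing R] {c p q : R}
    (h : ∀ k, q ^ k ∣ c * p ^ k) (y : R) (k : ℕ) : q ^ k ∣ c * (p - y * q) ^ k := by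
  rw [sub_eq_add_neg, add_pow, Finset.mul_sum]
  refine Finset.dvd_sum fun i hi => ?_
  have hyq : q ^ (k - i) ∣ (-(y * q)) ^ (k - i) :=
    pow_dvd_pow_of_dvd (dvd_neg.mpr (dvd_mul_left q y)) _
  calc q ^ k = q ^ i * q ^ (k - i) := by
        rw [← pow_add, Nat.add_sub_cancel' (Finset.mem_range_succ_iff.mp hi)]
    _ ∣ c * p ^ i * ((-(y * q)) ^ (k - i) * k.choose i) := mul_dvd_mul (h i) (hyq.mul_right _)
    _ = _ := by ring

theorem IsIntegral.exists_forall_isInteger_smul_pow {R L : Type*} [CommRing R] [CommRing L]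
    [Algebra R L] (M : Submonoid R) [IsLocalization M L] {x : L} (hx : IsIntegral R x) :
    ∃ b : M, ∀ k : ℕ, IsLocalization.IsInteger R ((b : R) • x ^ k) := by
  obtain ⟨s, hs⟩ := hx.fg_adjoin_singleton
  obtain ⟨b, hb⟩ := IsLocalization.exist_integer_multiples_of_finset M s
  suffices H : ∀ z ∈ Submodule.span R (s : Set L), IsLocalization.IsInteger R ((b : R) • z) from
    ⟨b, fun k => H _ (hs ▸ pow_mem (Algebra.self_mem_adjoin_singleton R x) k)⟩
  intro z hz
  induction hz using Submodule.span_induction with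
  | mem z hz => exact hb z hz
  | zero => rw [smul_zero]; exact IsLocalization.isInteger_zero
  | add w z _ _ hw hz => rw [smul_add]; exact IsLocalization.isInteger_add hw hz
  | smul r z _ hz => rw [smul_comm]; exact IsLocalization.isInteger_smul hz

theorem isIntegrallyClosed_of_forall_pow_dvd {R : Type*} [CommRing R] [IsDomain R]
    (H : ∀ c q p : R, c ≠ 0 → q ≠ 0 → (∀ k, q ^ k ∣ c * p ^ k) → q ∣ p) :
    IsIntegrallyClosed R := by
  rw [isIntegrallyClosed_iff (FractionRing R)]
  intro x hx
  obtain ⟨b, hb⟩ := hx.exists_forall_isInteger_smul_pow (nonZeroDivisors R)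
  obtain ⟨p, q, hq, rfl⟩ := IsFractionRing.div_surjective R x
  have hq' : algebraMap R (FractionRing R) q ≠ 0 :=
    IsFractionRing.to_map_ne_zero_of_mem_nonZeroDivisors hq
  have hdvd : ∀ k, q ^ k ∣ b * p ^ k := by
    intro k
    obtain ⟨r, hr⟩ := hb k
    refine ⟨r, IsFractionRing.injective R (FractionRing R) ?_⟩
    rw [Algebra.smul_def, div_pow] at hr
    rw [map_mul, map_mul, map_pow, map_pow, hr]
    field_simp
  obtain ⟨y, rfl⟩ := H b q p (nonZeroDivisors.ne_zero b.2) (nonZeroDivisors.ne_zero hq) hdvd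
  exact ⟨y, by rw [map_mul, mul_div_cancel_left₀ _ hq']⟩

namespace MonomialOrder

variable {σ : Type*} (m : MonomialOrder σ)

theorem degree_sub_lt {R : Type*} [CommRing R] {f g : MvPolynomial σ R}
    (hd : m.degree f = m.degree g) (hc : m.leadingCoeff f = m.leadingCoeff g) (hfg : f - g ≠ 0) :
    m.degree (f - g) ≺[m] m.degree f := by
  refine lt_of_le_of_ne (m.degree_sub_le.trans (by rw [hd, sup_idem])) fun h => ?_
  apply m.coeff_degree_ne_zero_iff.mpr hfg
  rw [m.toSyn.injective h, coeff_sub]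
  nth_rw 2 [hd]
  exact sub_eq_zero.mpr hc

theorem degree_sub_monomial_mul_lt {K : Type*} [Field K] {p q : MvPolynomial σ K}
    (hp : p ≠ 0) (hq : q ≠ 0) {e : σ →₀ ℕ} (he : m.degree p = e + m.degree q)
    (hne : p - monomial e (m.leadingCoeff p / m.leadingCoeff q) * q ≠ 0) :
    m.degree (p - monomial e (m.leadingCoeff p / m.leadingCoeff q) * q) ≺[m] m.degree p := by
  classical
  have hlq : m.leadingCoeff q ≠ 0 := m.leadingCoeff_ne_zero_iff.mpr hq
  have hc : m.leadingCoeff p / m.leadingCoeff q ≠ 0 :=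
    div_ne_zero (m.leadingCoeff_ne_zero_iff.mpr hp) hlq
  refine m.degree_sub_lt ?_ ?_ hne
  · rw [m.degree_mul ((monomial_eq_zero).not.mpr hc) hq, m.degree_monomial, if_neg hc, he]
  · rw [m.leadingCoeff_mul, m.leadingCoeff_monomial, div_mul_cancel₀ _ hlq]

end MonomialOrder

namespace MvPolynomial

variable {σ : Type*}

section CommSemiring

variable (K : Type*) [CommSemiring K]

open scoped Pointwise in
/-- The semigroup algebra `K[S]`. -/
noncomputable def semigroupAlgebra (S : AddSubmonoid (σ →₀ ℕ)) : Subalgebra K (MvPolynomial σ K) :=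
  (restrictSupport K (S : Set (σ →₀ ℕ))).toSubalgebra
    ((monomial_mem_restrictSupport K).mpr (Or.inl S.zero_mem))
    fun _ _ hx hy => restrictSupport_mono K
      (Set.add_subset_iff.mpr fun _ ha _ hb => S.add_mem ha hb)
      (restrictSupport_add K (S : Set (σ →₀ ℕ)) S ▸ Submodule.mul_mem_mul hx hy)

variable {K} {S : AddSubmonoid (σ →₀ ℕ)}

theorem monomial_mem_semigroupAlgebra {e : σ →₀ ℕ} (he : e ∈ S) (c : K) :
    monomial e c ∈ semigroupAlgebra K S :=
  (monomial_mem_restrictSupport K).mpr (Or.inl he)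

variable (K) in
theorem adjoin_monomial_eq_semigroupAlgebra (T : Set (σ →₀ ℕ)) :
    Algebra.adjoin K ((monomial · (1 : K)) '' T) =
      semigroupAlgebra K (AddSubmonoid.closure T) := by
  refine le_antisymm (Algebra.adjoin_le ?_) fun p hp => ?_
  · rintro _ ⟨t, ht, rfl⟩
    exact monomial_mem_semigroupAlgebra (AddSubmonoid.subset_closure ht) 1
  · have hp' : p ∈ restrictSupport K (AddSubmonoid.closure T : Set (σ →₀ ℕ)) := hp
    rw [restrictSupport_eq_span] at hp'
    refine (Submodule.span_le (p := Subalgebra.toSubmodule (Algebra.adjoin K _))).mpr ?_ hp'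
    rintro _ ⟨e, he, rfl⟩
    induction he using AddSubmonoid.closure_induction with
    | mem t ht => exact Algebra.subset_adjoin ⟨t, ht, rfl⟩
    | zero => exact (Algebra.adjoin K _).one_mem
    | add x y _ _ hx hy =>
      have hxy := (Algebra.adjoin K _).mul_mem hx hy
      rwa [monomial_mul, one_mul] at hxy

theorem exists_eq_add_of_monomial_mul_eq [Nontrivial K] {x y : σ →₀ ℕ} {z : MvPolynomial σ K}
    (h : monomial y 1 * z = monomial x 1) : ∃ e ∈ z.support, x = y + e := by
  classical
  have hz : z ≠ 0 := by
    rintro rfl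
    rw [mul_zero, eq_comm, monomial_eq_zero] at h
    exact one_ne_zero h
  obtain ⟨e, he⟩ := MvPolynomial.ne_zero_iff.mp hz
  refine ⟨e, mem_support_iff.mpr he, ?_⟩
  have hcoeff := coeff_monomial_mul e y (1 : K) z
  rw [h, one_mul, coeff_monomial] at hcoeff
  by_contra hne
  exact he (by rw [← hcoeff, if_neg hne])

end CommSemiring

section Domain

variable {K : Type*} [CommRing K] [IsDomain K] {S : AddSubmonoid (σ →₀ ℕ)}

theorem isRootClosed_of_isIntegrallyClosed [IsIntegrallyClosed (semigroupAlgebra K S)] :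
    S.IsRootClosed := by
  rintro x y hx hy m hm ⟨s, hs, hxy⟩
  let mono (e : σ →₀ ℕ) (he : e ∈ S) : semigroupAlgebra K S :=
    ⟨monomial e 1, monomial_mem_semigroupAlgebra he 1⟩
  have hdvd : mono y hy ∣ mono x hx := by
    rw [← IsIntegrallyClosed.pow_dvd_pow_iff hm]
    refine ⟨mono s hs, Subtype.ext ?_⟩
    simp [mono, monomial_pow, monomial_mul, hxy]
  obtain ⟨z, hz⟩ := hdvd
  obtain ⟨e, he, rfl⟩ := exists_eq_add_of_monomial_mul_eq (congrArg Subtype.val hz).symm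
  exact ⟨e, z.2 he, rfl⟩

theorem exists_degree_eq_add_of_forall_pow_dvd (m : MonomialOrder σ) (hS : S.FG)
    (hS' : S.IsRootClosed) {c p q : semigroupAlgebra K S} (hc : c ≠ 0) (hp : p ≠ 0) (hq : q ≠ 0)
    (h : ∀ k, q ^ k ∣ c * p ^ k) :
    ∃ e ∈ S, m.degree (p : MvPolynomial σ K) = m.degree (q : MvPolynomial σ K) + e := by
  choose r hr using h
  have hr0 (k : ℕ) : r k ≠ 0 := by
    rintro h0
    simpa [h0, hc, hp] using hr k
  set deg : semigroupAlgebra K S → σ →₀ ℕ := fun x => m.degree (x : MvPolynomial σ K)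
  have hdeg (k : ℕ) : deg c + k • deg p = k • deg q + deg (r k) := by
    have hk := congrArg deg (hr k)
    simp only [deg, Subalgebra.coe_mul, Subalgebra.coe_pow] at hk ⊢
    rwa [m.degree_mul (by simpa using hc) (pow_ne_zero _ (by simpa using hp)), m.degree_mul
      (pow_ne_zero _ (by simpa using hq)) (by simpa using hr0 k), m.degree_pow, m.degree_pow] at hk
  have hmem (x : semigroupAlgebra K S) (hx : x ≠ 0) : deg x ∈ S :=
    x.2 (m.degree_mem_support (by simpa using hx))
  obtain ⟨i, j, hij, s, hs, hsj⟩ := hS.exists_lt_add_mem (f := fun k => deg (r k))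
    fun k => hmem _ (hr0 k)
  obtain ⟨l, rfl⟩ := Nat.exists_eq_add_of_lt hij
  refine hS' (hmem p hp) (hmem q hq) l.succ_ne_zero
    ⟨s, hs, add_left_cancel (a := deg c + i • deg p) ?_⟩
  calc deg c + i • deg p + (l + 1) • deg p
      = deg c + (i + l + 1) • deg p := by rw [add_assoc, ← add_smul, ← add_assoc]
    _ = (i + l + 1) • deg q + deg (r (i + l + 1)) := hdeg _
    _ = (i • deg q + deg (r i)) + ((l + 1) • deg q + s) := by
        rw [hsj, add_assoc i, add_smul]; abel
    _ = deg c + i • deg p + ((l + 1) • deg q + s) := by rw [← hdeg i]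

end Domain

variable {K : Type*} [Field K] {S : AddSubmonoid (σ →₀ ℕ)}

theorem dvd_of_forall_pow_dvd_mul_pow [LinearOrder σ] [WellFoundedGT σ] (hS : S.FG)
    (hS' : S.IsRootClosed) {c q : semigroupAlgebra K S} (hc : c ≠ 0) (hq : q ≠ 0)
    (p : semigroupAlgebra K S) (h : ∀ k, q ^ k ∣ c * p ^ k) : q ∣ p := by
  let m : MonomialOrder σ := .lex
  generalize ht : m.toSyn (m.degree (p : MvPolynomial σ K)) = t
  induction t using WellFoundedLT.induction generalizing p with
  | _ t ih =>
    rcases eq_or_ne p 0 with rfl | hp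
    · exact dvd_zero q
    obtain ⟨e, he, hpq⟩ := exists_degree_eq_add_of_forall_pow_dvd m hS hS' hc hp hq h
    -- cancel the leading term of `p` against a monomial multiple of `q`
    let y : semigroupAlgebra K S :=
      ⟨monomial e (m.leadingCoeff (p : MvPolynomial σ K) / m.leadingCoeff (q : MvPolynomial σ K)),
        monomial_mem_semigroupAlgebra he _⟩
    suffices hdvd : q ∣ p - y * q by simpa using dvd_add hdvd (dvd_mul_left q y)
    rcases eq_or_ne (p - y * q) 0 with h0 | hne
    · rw [h0]
      exact dvd_zero q
    refine ih _ ?_ _ (pow_dvd_mul_sub_mul_pow h y) rfl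
    rw [← ht]
    simpa [y] using m.degree_sub_monomial_mul_lt (by simpa using hp) (by simpa using hq)
      (hpq.trans (add_comm _ _)) (by simpa [y] using fun h0 => hne (Subtype.ext h0))

theorem isIntegrallyClosed_semigroupAlgebra_iff [LinearOrder σ] [WellFoundedGT σ] (hS : S.FG) :
    IsIntegrallyClosed (semigroupAlgebra K S) ↔ S.IsRootClosed :=
  ⟨fun _ => isRootClosed_of_isIntegrallyClosed (K := K), fun hS' =>
    isIntegrallyClosed_of_forall_pow_dvd fun _ _ p hc hq h =>
      dvd_of_forall_pow_dvd_mul_pow hS hS' hc hq p h⟩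

end MvPolynomial

theorem nnSpan_range_eq_map {σ ι : Type*} [Fintype σ] (a : ι → σ → ℕ) :
    nnSpan (Set.range a) =
      (AddSubmonoid.closure (Set.range fun k => Finsupp.equivFunOnFinite.symm (a k))).map
        (((Nat.castAddMonoidHom ℤ).compLeft σ).comp Finsupp.coeFnAddHom) := by
  rw [AddMonoidHom.map_mclosure, ← Set.range_comp, nnSpan, ← Set.range_comp]
  rfl

theorem hochster_criterion_general (K : Type*) [Field K] {d n : ℕ} (a : Fin n → (Fin d → ℕ)) :
    IsIntegrallyClosed
      ↥(Algebra.adjoin K {p : MvPolynomial (Fin d) K |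
          ∃ k : Fin n, p = MvPolynomial.monomial (Finsupp.equivFunOnFinite.symm (a k)) (1 : K)})
    ↔ (∀ b₁ ∈ nnSpan (Set.range a), ∀ b₂ ∈ nnSpan (Set.range a),
        (∃ m : ℕ, 0 < m ∧ (m : ℤ) • (b₁ - b₂) ∈ nnSpan (Set.range a)) →
          b₁ - b₂ ∈ nnSpan (Set.range a)) := by
  have hgen : {p : MvPolynomial (Fin d) K |
      ∃ k : Fin n, p = monomial (Finsupp.equivFunOnFinite.symm (a k)) (1 : K)} =
        (monomial · 1) '' Set.range fun k => Finsupp.equivFunOnFinite.symm (a k) := by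
    ext
    simp [eq_comm]
  have hinj : Function.Injective
      (((Nat.castAddMonoidHom ℤ).compLeft (Fin d)).comp Finsupp.coeFnAddHom) :=
    fun u v huv => Finsupp.ext fun i => Nat.cast_injective (R := ℤ) (congrFun huv i)
  rw [hgen, adjoin_monomial_eq_semigroupAlgebra, isIntegrallyClosed_semigroupAlgebra_iff
    ((AddSubmonoid.fg_iff _).mpr ⟨_, rfl, Set.finite_range _⟩), nnSpan_range_eq_map]
  exact AddSubmonoid.isRootClosed_iff_map hinj _

/-- Hochster's criterion: the toric ring `K[A]` is normal if and only if every
ratio `M_1/M_2` of monomials of `K[A]` (encoded by the difference `b_1 - b_2` of elements of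
the affine semigroup of exponent vectors) some positive power of which lies in `K[A]`
itself lies in `K[A]`. -/
theorem hochster_criterion (K : Type*) [Field K] {d n : ℕ} (a : Fin n → (Fin d → ℕ))
    (hcfg : IsConfiguration (Set.range a)) :
    IsIntegrallyClosed
      ↥(Algebra.adjoin K {p : MvPolynomial (Fin d) K |
          ∃ k : Fin n, p = MvPolynomial.monomial (Finsupp.equivFunOnFinite.symm (a k)) (1 : K)})
    ↔ (∀ b₁ ∈ nnSpan (Set.range a), ∀ b₂ ∈ nnSpan (Set.range a),
        (∃ m : ℕ, 0 < m ∧ (m : ℤ) • (b₁ - b₂) ∈ nnSpan (Set.range a)) →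
          b₁ - b₂ ∈ nnSpan (Set.range a)) :=
  hochster_criterion_general K a
end

section
/- If the toric rings K[A], K[B_1], ..., K[B_d] are all normal, then the toric ring K[A(B_1,...,B_d)] of the nested configuration is normal. -/
open scoped BigOperators

section Nested
variable {d : ℕ} {μ : Fin d → ℕ}

/-- Embed a vector of exponents of the block of variables `u^{(i)}`
into the exponent space of all variables `u^{(1)},…,u^{(d)}`. -/
def blockEmb (μ : Fin d → ℕ) (i : Fin d) (v : Fin (μ i) → ℕ) :
    ((Σ j : Fin d, Fin (μ j)) → ℕ) :=
  fun p => if h : p.1 = i then v (h ▸ p.2) else 0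

/-- The nested configuration `A(B_1,…,B_d)`: exponent vectors of the monomials
`m_{j_1}^{(i_1)} ⋯ m_{j_r}^{(i_r)}` where `t_{i_1} ⋯ t_{i_r} ∈ A`. -/
def Nested (A : Set (Fin d → ℕ)) (B : ∀ i : Fin d, Set (Fin (μ i) → ℕ)) :
    Set ((Σ j : Fin d, Fin (μ j)) → ℕ) :=
  {v | ∃ a ∈ A, ∃ c : ∀ i : Fin d, Multiset (Fin (μ i) → ℕ),
    (∀ i, Multiset.card (c i) = a i) ∧ (∀ i, ∀ b ∈ c i, b ∈ B i) ∧
    v = ∑ i : Fin d, blockEmb μ i (c i).sum}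

end Nested

/-!
Write `C = A(B_1,…,B_d)` and let `v ∈ ℤC ∩ ℚ_{≥0}C`. Restriction to the `i`-th block of variables
is linear and maps every element of `C` into `ℕB_i`, so `v|_i ∈ ℤB_i ∩ ℚ_{≥0}B_i`, and normality
of `B_i` writes `v|_i` as the sum of a multiset `M_i` of elements of `B_i`. Measuring each block by
the hyperplane of `B_i` gives a linear map sending every element of `C` to an element of `A` and `v`
to `(|M_1|,…,|M_d|)`; hence this vector lies in `ℤA ∩ ℚ_{≥0}A` and, by normality of `A`, is a sum
of elements `a` of `A`. Distributing the `M_i` among these `a` (`a_i` elements of `M_i` to each)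
writes `v` as a sum of elements of `C`.
-/
section Semigroup
variable {σ τ : Type*}

@[simp]
lemma vecQ_vecZ_apply (v : σ → ℕ) (i : σ) : vecQ (vecZ v) i = v i := by
  simp [vecQ, vecZ]

lemma vecZ_injective : Function.Injective (vecZ (σ := σ)) :=
  fun _ _ h => funext fun i => Int.ofNat_inj.1 (congrFun h i)

lemma vecQ_injective : Function.Injective (vecQ (σ := σ)) :=
  fun _ _ h => funext fun i => Int.cast_inj.1 (congrFun h i)

def vecZHom : (σ → ℕ) →+ (σ → ℤ) := AddMonoidHom.compLeft (Nat.castAddMonoidHom ℤ) σ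

def vecQHom : (σ → ℤ) →+ (σ → ℚ) := AddMonoidHom.compLeft (Int.castAddHom ℚ) σ

lemma nnSpan_eq_map_closure (S : Set (σ → ℕ)) :
    nnSpan S = (AddSubmonoid.closure S).map vecZHom := by
  rw [AddMonoidHom.map_mclosure]
  rfl

lemma mem_nnSpan_iff {S : Set (σ → ℕ)} {v : σ → ℤ} :
    v ∈ nnSpan S ↔ ∃ M : Multiset (σ → ℕ), (∀ b ∈ M, b ∈ S) ∧ vecZ M.sum = v := by
  rw [nnSpan_eq_map_closure, AddSubmonoid.mem_map]
  constructor
  · rintro ⟨x, hx, rfl⟩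
    obtain ⟨M, hMS, rfl⟩ := AddSubmonoid.exists_multiset_of_mem_closure hx
    exact ⟨M, hMS, rfl⟩
  · rintro ⟨M, hMS, rfl⟩
    exact ⟨M.sum, AddSubmonoid.multiset_sum_mem _ _ fun b hb =>
      AddSubmonoid.subset_closure (hMS b hb), rfl⟩

lemma nnSpan_le_zSpan (S : Set (σ → ℕ)) : nnSpan S ≤ (zSpan S).toAddSubmonoid :=
  AddSubmonoid.closure_le.2 AddSubgroup.subset_closure

lemma mem_qCone_iff {S : Set (σ → ℕ)} {v : σ → ℤ} :
    v ∈ qCone S ↔ vecQ v ∈ PointedCone.hull ℚ ((fun s => vecQ (vecZ s)) '' S) := by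
  rw [Submodule.mem_span_set']
  constructor
  · rintro ⟨n, f, c, hfS, hc, hv⟩
    exact ⟨n, fun k => ⟨c k, hc k⟩, fun k => ⟨_, f k, hfS k, rfl⟩, hv.symm⟩
  · rintro ⟨n, c, g, hv⟩
    choose f hfS hf using fun k => (g k).2
    refine ⟨n, f, fun k => c k, hfS, fun k => (c k).2, ?_⟩
    rw [← hv]
    exact Finset.sum_congr rfl fun k _ => by rw [← hf k]; rfl

lemma vecQ_vecZ_mem_hull {T : Set (τ → ℕ)} {t : τ → ℕ} (ht : t ∈ AddSubmonoid.closure T) :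
    vecQ (vecZ t) ∈ PointedCone.hull ℚ ((fun s => vecQ (vecZ s)) '' T) := by
  have : (AddSubmonoid.closure T).map (vecQHom.comp vecZHom) ≤
      (PointedCone.hull ℚ ((fun s => vecQ (vecZ s)) '' T)).toAddSubmonoid := by
    rw [AddMonoidHom.map_mclosure, AddSubmonoid.closure_le]
    exact PointedCone.subset_hull
  exact this ⟨t, ht, rfl⟩

-- `f` need not preserve integer vectors (`blockDegree` below does not), hence the integer vector
-- `u` with `vecQ u = f (vecQ v)` in the two transfer lemmas.
variable (f : (σ → ℚ) →ₗ[ℚ] (τ → ℚ)) {S : Set (σ → ℕ)} {T : Set (τ → ℕ)}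
  (hf : ∀ s ∈ S, ∃ t ∈ AddSubmonoid.closure T, f (vecQ (vecZ s)) = vecQ (vecZ t))
include hf

lemma mem_zSpan_of_linearMap {v : σ → ℤ} {u : τ → ℤ} (hv : v ∈ zSpan S)
    (hu : vecQ u = f (vecQ v)) : u ∈ zSpan T := by
  have hmap : (zSpan S).map (f.toAddMonoidHom.comp vecQHom) ≤ (zSpan T).map vecQHom := by
    rw [zSpan, AddMonoidHom.map_closure, AddSubgroup.closure_le]
    rintro _ ⟨_, ⟨s, hs, rfl⟩, rfl⟩
    obtain ⟨t, ht, hst⟩ := hf s hs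
    refine ⟨vecZ t, nnSpan_le_zSpan T ?_, hst.symm⟩
    rw [nnSpan_eq_map_closure]
    exact ⟨t, ht, rfl⟩
  obtain ⟨y, hy, hyu⟩ := hmap ⟨v, hv, rfl⟩
  rwa [← vecQ_injective (hyu.trans hu.symm)]

lemma mem_qCone_of_linearMap {v : σ → ℤ} {u : τ → ℤ} (hv : v ∈ qCone S)
    (hu : vecQ u = f (vecQ v)) : u ∈ qCone T := by
  rw [mem_qCone_iff] at hv ⊢
  have hmap : (PointedCone.hull ℚ ((fun s => vecQ (vecZ s)) '' S)).map f ≤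
      PointedCone.hull ℚ ((fun s => vecQ (vecZ s)) '' T) := by
    rw [PointedCone.map, Submodule.map_span_le]
    rintro _ ⟨s, hs, rfl⟩
    obtain ⟨t, ht, hst⟩ := hf s hs
    rw [LinearMap.coe_restrictScalars, hst]
    exact vecQ_vecZ_mem_hull ht
  exact hu ▸ hmap ⟨_, hv, rfl⟩

end Semigroup

lemma Multiset.exists_le_card_eq {α : Type*} {M : Multiset α} {n : ℕ}
    (h : n ≤ Multiset.card M) : ∃ C ≤ M, Multiset.card C = n := by
  obtain ⟨C, hC⟩ := Multiset.card_pos_iff_exists_mem.1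
    (by rw [Multiset.card_powersetCard]; exact Nat.choose_pos h)
  exact ⟨C, Multiset.mem_powersetCard.1 hC⟩

lemma sum_mul_multiset_sum_eq_card {σ : Type*} [Fintype σ] {w : σ → ℚ} {M : Multiset (σ → ℕ)}
    (hM : ∀ b ∈ M, ∑ i, w i * (b i : ℚ) = 1) :
    ∑ i, w i * (M.sum i : ℚ) = Multiset.card M := by
  induction M using Multiset.induction_on with
  | empty => simp
  | cons b M ih =>
    simp only [Multiset.forall_mem_cons] at hM
    simp only [Multiset.sum_cons, Pi.add_apply, Nat.cast_add, mul_add, Finset.sum_add_distrib,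
      hM.1, ih hM.2, Multiset.card_cons]
    ring

section Nested
variable {d : ℕ} {μ : Fin d → ℕ} {A : Set (Fin d → ℕ)} {B : ∀ i : Fin d, Set (Fin (μ i) → ℕ)}

lemma sum_blockEmb (x : ∀ i, Fin (μ i) → ℕ) :
    ∑ i, blockEmb μ i (x i) = fun p => x p.1 p.2 := by
  funext ⟨i, j⟩
  rw [Finset.sum_apply, Finset.sum_eq_single i (fun i' _ hi' => by simp [blockEmb, hi'.symm])
    (by simp)]
  simp [blockEmb]

lemma mem_nested_iff {g : (Σ i, Fin (μ i)) → ℕ} :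
    g ∈ Nested A B ↔ ∃ a ∈ A, ∃ c : ∀ i, Multiset (Fin (μ i) → ℕ),
      (∀ i, Multiset.card (c i) = a i) ∧ (∀ i, ∀ b ∈ c i, b ∈ B i) ∧
      g = fun p => (c p.1).sum p.2 := by
  simp only [Nested, sum_blockEmb, Set.mem_ofPred_eq]

lemma block_mem_closure_of_mem_nested {g : (Σ i, Fin (μ i)) → ℕ} (hg : g ∈ Nested A B)
    (i : Fin d) : (fun j => g ⟨i, j⟩) ∈ AddSubmonoid.closure (B i) := by
  obtain ⟨a, -, c, -, hcB, rfl⟩ := mem_nested_iff.1 hg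
  exact AddSubmonoid.multiset_sum_mem _ _ fun b hb => AddSubmonoid.subset_closure (hcB i b hb)

def blockDegree (w : ∀ i, Fin (μ i) → ℚ) : ((Σ i, Fin (μ i)) → ℚ) →ₗ[ℚ] (Fin d → ℚ) where
  toFun x i := ∑ j, w i j * x ⟨i, j⟩
  map_add' x y := by
    funext i
    simp [mul_add, Finset.sum_add_distrib]
  map_smul' c x := by
    funext i
    simp [Finset.mul_sum, mul_left_comm]

lemma exists_blockDegree_eq_of_mem_nested {w : ∀ i, Fin (μ i) → ℚ}
    (hw : ∀ i, ∀ b ∈ B i, ∑ j, w i j * (b j : ℚ) = 1)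
    {g : (Σ i, Fin (μ i)) → ℕ} (hg : g ∈ Nested A B) :
    ∃ a ∈ A, blockDegree w (vecQ (vecZ g)) = vecQ (vecZ a) := by
  obtain ⟨a, ha, c, hca, hcB, rfl⟩ := mem_nested_iff.1 hg
  refine ⟨a, ha, funext fun i => ?_⟩
  simp only [blockDegree, LinearMap.coe_mk, AddHom.coe_mk, vecQ_vecZ_apply]
  rw [sum_mul_multiset_sum_eq_card fun b hb => hw i b (hcB i b hb), hca]

lemma mem_closure_nested_of_card_eq_sum {L : Multiset (Fin d → ℕ)} (hLA : ∀ a ∈ L, a ∈ A)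
    {M : ∀ i, Multiset (Fin (μ i) → ℕ)} (hMB : ∀ i, ∀ b ∈ M i, b ∈ B i)
    (hcard : ∀ i, Multiset.card (M i) = L.sum i) :
    (fun p => (M p.1).sum p.2) ∈ AddSubmonoid.closure (Nested A B) := by
  induction L using Multiset.induction_on generalizing M with
  | empty =>
    have hM0 : ∀ i, M i = 0 := fun i => Multiset.card_eq_zero.1 (by simpa using hcard i)
    simp only [hM0, Multiset.sum_zero, Pi.zero_apply]
    exact zero_mem _
  | cons a L ih =>
    simp only [Multiset.forall_mem_cons, Multiset.sum_cons, Pi.add_apply] at hLA hcard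
    choose C hCM hCa using fun i => Multiset.exists_le_card_eq (M := M i) (n := a i)
      (by rw [hcard i]; exact Nat.le_add_right _ _)
    have hsplit : (fun p : Σ i, Fin (μ i) => (M p.1).sum p.2) =
        (fun p => (C p.1).sum p.2) + fun p => (M p.1 - C p.1).sum p.2 := by
      funext p
      rw [Pi.add_apply, ← Pi.add_apply, ← Multiset.sum_add, add_tsub_cancel_of_le (hCM p.1)]
    rw [hsplit]
    refine add_mem (AddSubmonoid.subset_closure ?_) (ih hLA.2 (M := fun i => M i - C i) ?_ ?_)
    · exact mem_nested_iff.2 ⟨a, hLA.1, C, hCa,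
        fun i b hb => hMB i b (Multiset.mem_of_le (hCM i) hb), rfl⟩
    · exact fun i b hb => hMB i b (Multiset.mem_of_le (Multiset.sub_le_self _ _) hb)
    · intro i
      rw [Multiset.card_sub (hCM i), hcard i, hCa i, Nat.add_sub_cancel_left]

end Nested

theorem nested_normal_general {d : ℕ} {μ : Fin d → ℕ}
    (A : Set (Fin d → ℕ)) (B : ∀ i : Fin d, Set (Fin (μ i) → ℕ))
    (hB : ∀ i, IsConfiguration (B i))
    (hAn : IsNormalCfg A) (hBn : ∀ i, IsNormalCfg (B i)) :
    IsNormalCfg (Nested A B) := by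
  intro v hvZ hvQ
  have hblock (i : Fin d) : (fun j => v ⟨i, j⟩) ∈ nnSpan (B i) := by
    have hres : ∀ g ∈ Nested A B, ∃ t ∈ AddSubmonoid.closure (B i),
        LinearMap.funLeft ℚ ℚ (Sigma.mk i) (vecQ (vecZ g)) = vecQ (vecZ t) :=
      fun g hg => ⟨_, block_mem_closure_of_mem_nested hg i, rfl⟩
    exact hBn i _ (mem_zSpan_of_linearMap (LinearMap.funLeft ℚ ℚ (Sigma.mk i)) hres hvZ rfl)
      (mem_qCone_of_linearMap _ hres hvQ rfl)
  choose M hMB hMv using fun i => mem_nnSpan_iff.1 (hblock i)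
  choose w hw using fun i => (hB i).2
  have hdeg : vecQ (vecZ fun i => Multiset.card (M i)) = blockDegree w (vecQ v) := by
    funext i
    rw [vecQ_vecZ_apply, ← sum_mul_multiset_sum_eq_card fun b hb => hw i b (hMB i b hb)]
    refine Finset.sum_congr rfl fun j _ => ?_
    rw [← vecQ_vecZ_apply, hMv]
    rfl
  have hα : vecZ (fun i => Multiset.card (M i)) ∈ nnSpan A := by
    have hgen : ∀ g ∈ Nested A B, ∃ a ∈ AddSubmonoid.closure A,
        blockDegree w (vecQ (vecZ g)) = vecQ (vecZ a) := fun g hg =>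
      (exists_blockDegree_eq_of_mem_nested hw hg).imp fun _ h =>
        ⟨AddSubmonoid.subset_closure h.1, h.2⟩
    exact hAn _ (mem_zSpan_of_linearMap _ hgen hvZ hdeg) (mem_qCone_of_linearMap _ hgen hvQ hdeg)
  obtain ⟨L, hLA, hL⟩ := mem_nnSpan_iff.1 hα
  rw [nnSpan_eq_map_closure]
  refine ⟨_, mem_closure_nested_of_card_eq_sum hLA hMB
    fun i => (congrFun (vecZ_injective hL) i).symm, ?_⟩
  funext p
  exact congrFun (hMv p.1) p.2

/-- if the toric rings `K[A]`, `K[B_1]`, …, `K[B_d]` are all normal, then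
the toric ring of the nested configuration `A(B_1,…,B_d)` is normal. -/
theorem nested_normal {d r : ℕ} {μ : Fin d → ℕ}
    (A : Set (Fin d → ℕ)) (B : ∀ i : Fin d, Set (Fin (μ i) → ℕ))
    (hA : IsConfiguration A)
    (hdeg : ∀ v ∈ A, ∑ i, v i = r)
    (hcov : ∀ i : Fin d, ∃ v ∈ A, v i ≠ 0)
    (hB : ∀ i, IsConfiguration (B i))
    (hAn : IsNormalCfg A) (hBn : ∀ i, IsNormalCfg (B i)) :
    IsNormalCfg (Nested A B) :=
  nested_normal_general A B hB hAn hBn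
end

section
/- The semigroup ring K[v, uv, u^3v, u^4v, w] is not very ample: for every α ∈ Z_{≥0}, the monomial u^2 v w^α does not belong to it, so infinitely many lattice points of the cone∩lattice lie outside the semigroup. -/
open scoped BigOperators

/-!
The only generators of `v`-degree `0` are powers of `w`, which have `u`-degree `0`, and all
generators have `v`-degree at most `1`. Hence a semigroup element of `v`-degree `1` is one
generator of `v`-degree `1` plus powers of `w`, so its `u`-degree is one of `0, 1, 3, 4`.
On the other hand `u²v = u³v · v / uv` lies in the group and `(u²v)² = v · u⁴v` in the cone.
-/

section
variable {σ : Type*} {S : Set (σ → ℕ)}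

theorem vecZ_mem_zSpan {a : σ → ℕ} (ha : a ∈ S) : vecZ a ∈ zSpan S :=
  AddSubgroup.subset_closure ⟨a, ha, rfl⟩

theorem coord_of_mem_nnSpan {i j : σ} (hS : ∀ a ∈ S, a i = 0 → a j = 0) {v : σ → ℤ}
    (hv : v ∈ nnSpan S) :
    0 ≤ v i ∧ (v i = 0 → v j = 0) ∧ (v i = 1 → ∃ a ∈ S, a i = 1 ∧ v j = a j) := by
  induction hv using AddSubmonoid.closure_induction with
  | mem x hx =>
    obtain ⟨a, ha, rfl⟩ := hx
    simp only [vecZ, Nat.cast_nonneg, Nat.cast_eq_zero, Nat.cast_eq_one, Nat.cast_inj, true_and]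
    exact ⟨by simpa using hS a ha, fun h => ⟨a, ha, h, rfl⟩⟩
  | zero => simp
  | add x y _ _ hx hy =>
    obtain ⟨hx₀, hx₁, hx₂⟩ := hx
    obtain ⟨hy₀, hy₁, hy₂⟩ := hy
    simp only [Pi.add_apply]
    refine ⟨by omega, fun h => ?_, fun h => ?_⟩
    · rw [hx₁ (by omega), hy₁ (by omega), add_zero]
    · rcases (by omega : x i = 1 ∧ y i = 0 ∨ x i = 0 ∧ y i = 1) with ⟨hx', hy'⟩ | ⟨hx', hy'⟩
      · simpa [hy₁ hy'] using hx₂ hx'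
      · simpa [hx₁ hx'] using hy₂ hy'

theorem not_isVeryAmpleCfg_of_injective {f : ℕ → σ → ℤ} (hf : Function.Injective f)
    (hz : ∀ n, f n ∈ zSpan S) (hq : ∀ n, f n ∈ qCone S) (hn : ∀ n, f n ∉ nnSpan S) :
    ¬ IsVeryAmpleCfg S := fun hfin =>
  Set.infinite_range_of_injective hf <|
    hfin.subset <| Set.range_subset_iff.2 fun n => ⟨⟨hz n, hq n⟩, hn n⟩

end

def cfgUVW : Set (Fin 3 → ℕ) := {![0,1,0], ![1,1,0], ![3,1,0], ![4,1,0], ![0,0,1]}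

theorem u2vw_mem_zSpan (α : ℕ) : vecZ ![2,1,α] ∈ zSpan cfgUVW := by
  have heq : vecZ ![2,1,α] =
      vecZ ![3,1,0] - vecZ ![1,1,0] + vecZ ![0,1,0] + α • vecZ ![0,0,1] := by
    funext i; fin_cases i <;> simp [vecZ]
  rw [heq]
  exact add_mem (add_mem (sub_mem (vecZ_mem_zSpan (by simp [cfgUVW]))
    (vecZ_mem_zSpan (by simp [cfgUVW]))) (vecZ_mem_zSpan (by simp [cfgUVW])))
    (nsmul_mem (vecZ_mem_zSpan (by simp [cfgUVW])) α)

theorem u2vw_mem_qCone (α : ℕ) : vecZ ![2,1,α] ∈ qCone cfgUVW := by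
  refine ⟨3, ![![0,1,0], ![4,1,0], ![0,0,1]], ![1/2, 1/2, (α : ℚ)], ?_, ?_, ?_⟩
  · intro k; fin_cases k <;> simp [cfgUVW]
  · intro k; fin_cases k <;> norm_num
  · funext i
    fin_cases i <;> simp [vecQ, vecZ, Fin.sum_univ_three] <;> norm_num

theorem u2vw_notMem_nnSpan (α : ℕ) : vecZ ![2,1,α] ∉ nnSpan cfgUVW := by
  intro h
  have hS : ∀ a ∈ cfgUVW, a 1 = 0 → a 0 = 0 := by simp [cfgUVW]
  obtain ⟨a, ha, ha₁, ha₀⟩ := (coord_of_mem_nnSpan (i := 1) (j := 0) hS h).2.2 (by simp [vecZ])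
  simp only [cfgUVW, Set.mem_insert_iff, Set.mem_singleton_iff] at ha
  rcases ha with rfl | rfl | rfl | rfl | rfl <;> simp [vecZ] at ha₀ ha₁

/-- the semigroup ring `K[v, uv, u³v, u⁴v, w]` is not very ample: for every
`α ∈ ℤ_{≥0}` the monomial `u²vw^α` lies in the group and in the rational cone generated by
the exponent vectors but not in the semigroup, so infinitely many lattice points of
cone ∩ lattice lie outside the semigroup. -/
theorem not_veryAmple_example :
    (∀ α : ℕ,
      vecZ ![2, 1, α] ∈ zSpan ({![0,1,0], ![1,1,0], ![3,1,0], ![4,1,0], ![0,0,1]} :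
          Set (Fin 3 → ℕ)) ∧
      vecZ ![2, 1, α] ∈ qCone ({![0,1,0], ![1,1,0], ![3,1,0], ![4,1,0], ![0,0,1]} :
          Set (Fin 3 → ℕ)) ∧
      vecZ ![2, 1, α] ∉ nnSpan ({![0,1,0], ![1,1,0], ![3,1,0], ![4,1,0], ![0,0,1]} :
          Set (Fin 3 → ℕ))) ∧
    ¬ IsVeryAmpleCfg ({![0,1,0], ![1,1,0], ![3,1,0], ![4,1,0], ![0,0,1]} :
        Set (Fin 3 → ℕ)) := by
  have hinj : Function.Injective fun α : ℕ => vecZ ![2,1,α] := fun a b hab => by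
    simpa [vecZ] using congrFun hab 2
  exact ⟨fun α => ⟨u2vw_mem_zSpan α, u2vw_mem_qCone α, u2vw_notMem_nnSpan α⟩,
    not_isVeryAmpleCfg_of_injective hinj u2vw_mem_zSpan u2vw_mem_qCone u2vw_notMem_nnSpan⟩
end

section
/- Every combinatorial pure subring of a normal affine semigroup ring is normal, and every combinatorial pure subring of a very ample affine semigroup ring is very ample. -/
open scoped BigOperators

/-- `S` is (the exponent-vector set of) a combinatorial pure subring of `T`:
`S` consists of the elements of `T` lying on a face (cut out by a supporting
hyperplane) of the convex hull of `T`. -/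
def IsCPS {σ : Type*} [Fintype σ] (S T : Set (σ → ℕ)) : Prop :=
  S ⊆ T ∧ ∃ (w : σ → ℚ) (b : ℚ), (∀ v ∈ T, ∑ i, w i * (v i : ℚ) ≤ b) ∧
    S = {v ∈ T | ∑ i, w i * (v i : ℚ) = b}

/-!
A face of `conv T` is cut out by a rational functional `u` that is `≥ 0` on `T` and vanishes
exactly on `S` (homogenize the supporting hyperplane `w · x ≤ b` with the hyperplane
`w₀ · x = 1` containing `T`). Then `u` vanishes on the cone over `S`, and a sum of elements of `T`
on which `u` vanishes uses only elements of `S`. Hence `ℚ_{≥0} S ∩ ℤ_{≥0} T = ℤ_{≥0} S`, and since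
`ℤ S ⊆ ℤ T` and `ℚ_{≥0} S ⊆ ℚ_{≥0} T`, we get
`(ℤ S ∩ ℚ_{≥0} S) \ ℤ_{≥0} S ⊆ (ℤ T ∩ ℚ_{≥0} T) \ ℤ_{≥0} T`.
-/

theorem AddSubmonoid.mem_closure_inter_ker_of_nonneg {M N : Type*} [AddCommMonoid M]
    [AddCommMonoid N] [PartialOrder N] [IsOrderedAddMonoid N] (f : M →+ N) {s : Set M}
    (hs : ∀ y ∈ s, 0 ≤ f y) {x : M} (hx : x ∈ closure s) (hfx : f x = 0) :
    x ∈ closure {y ∈ s | f y = 0} := by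
  suffices h : ∀ x ∈ closure s, 0 ≤ f x ∧ (f x = 0 → x ∈ closure {y ∈ s | f y = 0}) from
    (h x hx).2 hfx
  intro x hx
  induction hx using AddSubmonoid.closure_induction with
  | mem y hy => exact ⟨hs y hy, fun hy0 => AddSubmonoid.subset_closure ⟨hy, hy0⟩⟩
  | zero => exact ⟨(map_zero f).ge, fun _ => zero_mem _⟩
  | add y z _ _ hy hz =>
    refine ⟨map_add f y z ▸ add_nonneg hy.1 hz.1, fun h0 => ?_⟩
    rw [map_add, add_eq_zero_iff_of_nonneg hy.1 hz.1] at h0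
    exact add_mem (hy.2 h0.1) (hz.2 h0.2)

section Semigroup
variable {σ : Type*}

theorem zSpan_mono {S T : Set (σ → ℕ)} (h : S ⊆ T) : zSpan S ≤ zSpan T :=
  AddSubgroup.closure_mono (Set.image_mono h)

theorem qCone_mono {S T : Set (σ → ℕ)} (h : S ⊆ T) : qCone S ⊆ qCone T :=
  fun _ ⟨n, f, c, hf, hc, hv⟩ => ⟨n, f, c, fun k => h (hf k), hc, hv⟩

theorem IsNormalCfg.of_subset {S T : Set (σ → ℕ)} (hST : S ⊆ T)
    (hpure : ∀ v ∈ qCone S, v ∈ nnSpan T → v ∈ nnSpan S) (hT : IsNormalCfg T) :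
    IsNormalCfg S :=
  fun v hvz hvq => hpure v hvq (hT v (zSpan_mono hST hvz) (qCone_mono hST hvq))

theorem IsVeryAmpleCfg.of_subset {S T : Set (σ → ℕ)} (hST : S ⊆ T)
    (hpure : ∀ v ∈ qCone S, v ∈ nnSpan T → v ∈ nnSpan S) (hT : IsVeryAmpleCfg T) :
    IsVeryAmpleCfg S :=
  hT.subset fun _ ⟨⟨hvz, hvq⟩, hvn⟩ =>
    ⟨⟨zSpan_mono hST hvz, qCone_mono hST hvq⟩, fun hvT => hvn (hpure _ hvq hvT)⟩

variable [Fintype σ]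

def pairing (u : σ → ℚ) : (σ → ℤ) →+ ℚ :=
  AddMonoidHom.mk' (fun v => u ⬝ᵥ vecQ v) fun v v' => by
    rw [← dotProduct_add]
    congr 1
    ext i
    simp [vecQ]

theorem pairing_apply (u : σ → ℚ) (v : σ → ℤ) : pairing u v = u ⬝ᵥ vecQ v := rfl

theorem pairing_vecZ (u : σ → ℚ) (a : σ → ℕ) : pairing u (vecZ a) = ∑ i, u i * (a i : ℚ) := by
  simp [pairing_apply, vecQ, vecZ, dotProduct]

theorem pairing_eq_zero_of_mem_qCone {u : σ → ℚ} {S : Set (σ → ℕ)}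
    (hS : ∀ a ∈ S, pairing u (vecZ a) = 0) {v : σ → ℤ} (hv : v ∈ qCone S) :
    pairing u v = 0 := by
  obtain ⟨n, f, c, hf, -, hv⟩ := hv
  rw [pairing_apply, hv, dotProduct_sum]
  refine Finset.sum_eq_zero fun k _ => ?_
  rw [dotProduct_smul, ← pairing_apply, hS _ (hf k), smul_zero]

theorem mem_nnSpan_of_pairing_eq_zero {S T : Set (σ → ℕ)} {u : σ → ℚ}
    (hT : ∀ a ∈ T, 0 ≤ pairing u (vecZ a)) (hS : S = {a ∈ T | pairing u (vecZ a) = 0})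
    {v : σ → ℤ} (hv : v ∈ nnSpan T) (hu : pairing u v = 0) : v ∈ nnSpan S := by
  have hv' := AddSubmonoid.mem_closure_inter_ker_of_nonneg (pairing u)
    (by rintro _ ⟨a, ha, rfl⟩; exact hT a ha) hv hu
  refine AddSubmonoid.closure_mono ?_ hv'
  rintro _ ⟨⟨a, ha, rfl⟩, h0⟩
  exact ⟨a, hS ▸ ⟨ha, h0⟩, rfl⟩

theorem IsCPS.exists_supporting_pairing {S T : Set (σ → ℕ)} (hST : IsCPS S T) {w₀ : σ → ℚ}
    (hw₀ : ∀ a ∈ T, ∑ i, w₀ i * (a i : ℚ) = 1) :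
    ∃ u : σ → ℚ, (∀ a ∈ T, 0 ≤ pairing u (vecZ a)) ∧ S = {a ∈ T | pairing u (vecZ a) = 0} := by
  obtain ⟨-, w, b, hle, rfl⟩ := hST
  have key : ∀ a ∈ T, pairing (b • w₀ - w) (vecZ a) = b - ∑ i, w i * (a i : ℚ) := by
    intro a ha
    simp [pairing_vecZ, sub_mul, Finset.sum_sub_distrib, mul_assoc, ← Finset.mul_sum, hw₀ a ha]
  refine ⟨b • w₀ - w, fun a ha => by simpa [key a ha] using hle a ha, ?_⟩
  ext a
  simp only [Set.mem_ofPred_eq]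
  exact and_congr_right fun ha => by rw [key a ha, sub_eq_zero, eq_comm]

theorem IsCPS.mem_nnSpan_of_mem_qCone {S T : Set (σ → ℕ)} (hST : IsCPS S T) {w₀ : σ → ℚ}
    (hw₀ : ∀ a ∈ T, ∑ i, w₀ i * (a i : ℚ) = 1) {v : σ → ℤ} (hvS : v ∈ qCone S)
    (hvT : v ∈ nnSpan T) : v ∈ nnSpan S := by
  obtain ⟨u, hT, hS⟩ := hST.exists_supporting_pairing hw₀
  have hSu : ∀ a ∈ S, pairing u (vecZ a) = 0 := fun a ha => (hS ▸ ha).2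
  exact mem_nnSpan_of_pairing_eq_zero hT hS hvT (pairing_eq_zero_of_mem_qCone hSu hvS)

end Semigroup

/-- every combinatorial pure subring of a normal affine semigroup ring is
normal, and every combinatorial pure subring of a very ample affine semigroup ring is
very ample. -/
theorem cps_normal_and_veryAmple {σ : Type*} [Fintype σ] (S T : Set (σ → ℕ))
    (hT : IsConfiguration T) (hcps : IsCPS S T) :
    (IsNormalCfg T → IsNormalCfg S) ∧ (IsVeryAmpleCfg T → IsVeryAmpleCfg S) := by
  obtain ⟨-, w₀, hw₀⟩ := hT
  have hpure : ∀ v ∈ qCone S, v ∈ nnSpan T → v ∈ nnSpan S :=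
    fun _ hvS hvT => hcps.mem_nnSpan_of_mem_qCone hw₀ hvS hvT
  exact ⟨IsNormalCfg.of_subset hcps.1 hpure, IsVeryAmpleCfg.of_subset hcps.1 hpure⟩
end

section
/- (Sorting lemma) Let p_1 = x^{(k)}_{(i_1,j_1)⋯(i_r,j_r)} x^{(k)}_{(i_{r+1},j_{r+1})⋯(i_{2r},j_{2r})} be a quadratic monomial in the presentation ring of the nested configuration, and let (i_1',j_1')⋯(i_{2r}',j_{2r}') = sort((i_1,j_1)⋯(i_{2r},j_{2r})) be the weakly increasing rearrangement. Then the sorted product p_2 = x^{(k)}_{(i_1',j_1')(i_3',j_3')⋯(i_{2r-1}',j_{2r-1}')} x^{(k)}_{(i_2',j_2')(i_4',j_4')⋯(i_{2r}',j_{2r}')} is a well-defined monomial (both index strings correspond to elements of A(B_1,...,B_d) mapping to t^{a_k}), and p_1 − p_2 lies in the toric ideal I_{A(B_1,...,B_d)}. -/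
section Toric
open MvPolynomial

/-- The toric ideal of a family of monomials: the kernel of the `K`-algebra map from the
polynomial ring in variables indexed by `V` sending the `v`-th variable to the monomial
with exponent vector `π v`. -/
noncomputable def toricIdeal (K : Type*) [Field K] {V σ : Type*} [Fintype σ]
    (π : V → σ → ℕ) : Ideal (MvPolynomial V K) :=
  RingHom.ker (MvPolynomial.aeval
    (fun v => ∏ i, (MvPolynomial.X i : MvPolynomial σ K) ^ π v i) :
      MvPolynomial V K →ₐ[K] MvPolynomial σ K).toRingHom

end Toric

section Presentation

variable {n d r : ℕ} {lam : Fin d → ℕ}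

/-- The lexicographic sorting key of an index pair `(i, j)`. -/
def pairKey {d : ℕ} {lam : Fin d → ℕ} (p : Σ i : Fin d, Fin (lam i)) : Lex (ℕ × ℕ) :=
  toLex (((p.1 : ℕ)), ((p.2 : ℕ)))

/-- Variables `x^{(k)}_{(i_1,j_1)⋯(i_r,j_r)}` of the presentation ring of the nested
configuration: `k` indexes a monomial `t^{a_k}` of `A`, and `s` is a weakly increasing
(for the lexicographic order on pairs) sequence of pairs `(i_ℓ, j_ℓ)` with
`t_{i_1}⋯t_{i_r} = t^{a_k}`. -/
structure NestVar (a : Fin n → Fin d → ℕ) (r : ℕ) (lam : Fin d → ℕ) where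
  k : Fin n
  s : Fin r → Σ i : Fin d, Fin (lam i)
  mono : Monotone fun t => pairKey (s t)
  count : ∀ i : Fin d, a k i = (Finset.univ.filter fun t => (s t).1 = i).card

/-- The exponent vector of the monomial `m_{j_1}^{(i_1)}⋯m_{j_r}^{(i_r)}` represented by a
variable of the presentation ring. -/
def NestVar.val {a : Fin n → Fin d → ℕ} {μ : Fin d → ℕ}
    (m : ∀ i : Fin d, Fin (lam i) → Fin (μ i) → ℕ) (x : NestVar a r lam) :
    ((Σ j : Fin d, Fin (μ j)) → ℕ) :=
  ∑ t : Fin r, blockEmb μ (x.s t).1 (m (x.s t).1 (x.s t).2)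

/-- The multiset of index pairs `(i_ℓ, j_ℓ)` of a presentation variable. -/
def NestVar.pairs {a : Fin n → Fin d → ℕ} (x : NestVar a r lam) :
    Multiset (Σ i : Fin d, Fin (lam i)) :=
  Multiset.map x.s Finset.univ.val

end Presentation

/-!
Sorting the merged string lexicographically sorts it in particular by first index, so the
positions carrying a given first index `i` form a block of consecutive positions, of length
`2 a_k(i)` because the merged string is the union of the two index strings. A block of even
length contains as many even as odd positions, so each alternating half again has `a_k(i)`
entries with first index `i` and is an index string for `k`. Both products are products over
the same multiset of pairs, so they have the same image under `π`.
-/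

open Finset MvPolynomial

theorem X_mul_X_sub_X_mul_X_mem_toricIdeal (K : Type*) [Field K] {V σ : Type*} [Fintype σ]
    {π : V → σ → ℕ} {u v w z : V} (h : π u + π v = π w + π z) :
    (X u * X v - X w * X z : MvPolynomial V K) ∈ toricIdeal K π := by
  rw [toricIdeal, RingHom.mem_ker]
  simp only [AlgHom.toRingHom_eq_coe, RingHom.coe_coe, map_sub, map_mul, aeval_X,
    sub_eq_zero, ← prod_mul_distrib, ← pow_add]
  simp only [← Pi.add_apply, h]

theorem Fin.sum_univ_two_mul {M : Type*} [AddCommMonoid M] {r : ℕ} (f : Fin (2 * r) → M) :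
    ∑ u, f u = ∑ t : Fin r, f ⟨2 * t, by omega⟩ + ∑ t : Fin r, f ⟨2 * t + 1, by omega⟩ := by
  rw [← (finProdFinEquiv.trans (finCongr (mul_comm r 2))).sum_comp, Fintype.sum_prod_type,
    ← sum_add_distrib]
  refine sum_congr rfl fun t _ => ?_
  rw [Fin.sum_univ_two]
  congr 2 <;> ext <;> simp [finProdFinEquiv, add_comm]

theorem Fin.card_filter_two_mul_add_mem_Ico {r : ℕ} (L a e : ℕ) (he : e ≤ 1)
    (h : L + 2 * a ≤ 2 * r) :
    #{t : Fin r | L ≤ 2 * t + e ∧ 2 * t + e < L + 2 * a} = a := by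
  have : map valEmbedding {t : Fin r | L ≤ 2 * t + e ∧ 2 * t + e < L + 2 * a} =
      Ico ((L + 1 - e) / 2) ((L + 1 - e) / 2 + a) := by
    ext u
    simp only [mem_map, mem_filter, mem_univ, true_and, valEmbedding_apply, mem_Ico]
    constructor
    · rintro ⟨t, ht, rfl⟩; omega
    · intro hu; exact ⟨⟨u, by omega⟩, by simp only; omega, rfl⟩
  rw [← card_map, this, Nat.card_Ico]
  omega

theorem Monotone.apply_eq_iff_between_cards {α : Type*} [LinearOrder α] {N : ℕ}
    {g : Fin N → α} (hg : Monotone g) (c : α) (u : Fin N) :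
    g u = c ↔ #{v | g v < c} ≤ u ∧ u < #{v | g v ≤ c} := by
  rw [← not_lt, Fin.lt_card_filter_univ_iff_apply_of_imp _ fun _ _ h h' => (hg h).trans_lt h',
    Fin.lt_card_filter_univ_iff_apply_of_imp _ fun _ _ h h' => (hg h).trans h', not_lt,
    le_antisymm_iff, and_comm]

theorem card_filter_le_eq_card_filter_lt_add {ι α : Type*} [Fintype ι] [LinearOrder α]
    (g : ι → α) (c : α) :
    #{v | g v ≤ c} = #{v | g v < c} + #{v | g v = c} := by
  classical
  rw [← card_union_of_disjoint (disjoint_filter.2 fun _ _ h => h.ne), ← filter_or]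
  simp_rw [le_iff_lt_or_eq]

theorem Monotone.card_filter_even_odd_eq {α : Type*} [LinearOrder α] {r a : ℕ}
    {g : Fin (2 * r) → α} (hg : Monotone g) {c : α} (hc : #{u | g u = c} = 2 * a) :
    #{t : Fin r | g ⟨2 * t, by omega⟩ = c} = a ∧
      #{t : Fin r | g ⟨2 * t + 1, by omega⟩ = c} = a := by
  have hU : #{v | g v ≤ c} = #{v | g v < c} + 2 * a := by
    rw [card_filter_le_eq_card_filter_lt_add, hc]
  have hbound : #{v | g v < c} + 2 * a ≤ 2 * r := hU ▸ (card_filter_le _ _).trans (by simp)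
  constructor
  · rw [← Fin.card_filter_two_mul_add_mem_Ico (r := r) _ a 0 zero_le_one hbound]
    congr 1
    ext t
    simp only [mem_filter, mem_univ, true_and, hg.apply_eq_iff_between_cards, hU, add_zero]
  · rw [← Fin.card_filter_two_mul_add_mem_Ico (r := r) _ a 1 le_rfl hbound]
    congr 1
    ext t
    simp only [mem_filter, mem_univ, true_and, hg.apply_eq_iff_between_cards, hU]

namespace NestVar

variable {n d r : ℕ} {lam : Fin d → ℕ} {a : Fin n → Fin d → ℕ}

theorem val_eq_sum_map_pairs {μ : Fin d → ℕ} (m : ∀ i, Fin (lam i) → Fin (μ i) → ℕ)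
    (x : NestVar a r lam) : x.val m = (x.pairs.map fun p => blockEmb μ p.1 (m p.1 p.2)).sum := by
  rw [NestVar.pairs, Multiset.map_map]
  rfl

theorem countP_fst_pairs (x : NestVar a r lam) (i : Fin d) :
    x.pairs.countP (fun p => p.1 = i) = a x.k i := by
  rw [NestVar.pairs, Multiset.countP_map, x.count i]
  rfl

end NestVar

/-- sorting lemma: if `p₁ = x^{(k)}_{(i_1,j_1)⋯} x^{(k)}_{⋯(i_{2r},j_{2r})}`
is a quadratic monomial of the presentation ring and `merged` is the weakly increasing
rearrangement of the concatenated index string, then the alternating split of `merged`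
yields well-defined variables `y₁, y₂` (both with the same `k`), and
`p₁ - p₂ = X x₁ · X x₂ - X y₁ · X y₂` lies in the toric ideal of `A(B_1,…,B_d)`. -/
theorem sorting_lemma (K : Type*) [Field K] {n d r : ℕ} {lam μ : Fin d → ℕ}
    (a : Fin n → Fin d → ℕ) (m : ∀ i : Fin d, Fin (lam i) → Fin (μ i) → ℕ)
    (x₁ x₂ : NestVar a r lam) (hk : x₁.k = x₂.k)
    (merged : Fin (2 * r) → Σ i : Fin d, Fin (lam i))
    (hmono : Monotone fun t => pairKey (merged t))
    (hms : Multiset.map merged Finset.univ.val = x₁.pairs + x₂.pairs) :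
    ∃ y₁ y₂ : NestVar a r lam, y₁.k = x₁.k ∧ y₂.k = x₁.k ∧
      (∀ t : Fin r, y₁.s t = merged ⟨2 * (t : ℕ), by have := t.isLt; omega⟩) ∧
      (∀ t : Fin r, y₂.s t = merged ⟨2 * (t : ℕ) + 1, by have := t.isLt; omega⟩) ∧
      (MvPolynomial.X x₁ * MvPolynomial.X x₂ - MvPolynomial.X y₁ * MvPolynomial.X y₂ :
          MvPolynomial (NestVar a r lam) K) ∈ toricIdeal K (NestVar.val m) := by
  have hfst : Monotone fun u => (merged u).1 := fun u v h =>
    Fin.le_iff_val_le_val.2 (Prod.Lex.monotone_fst _ _ (hmono h))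
  have hcount (i : Fin d) : #{u | (merged u).1 = i} = 2 * a x₁.k i := by
    have := congrArg (Multiset.countP fun p => p.1 = i) hms
    rwa [Multiset.countP_add, x₁.countP_fst_pairs, x₂.countP_fst_pairs, ← hk, ← two_mul,
      Multiset.countP_map] at this
  let y₁ : NestVar a r lam := ⟨x₁.k, fun t => merged ⟨2 * t, by omega⟩,
    hmono.comp fun t t' h => Fin.mk_le_mk.2 (by omega),
    fun i => (hfst.card_filter_even_odd_eq (hcount i)).1.symm⟩
  let y₂ : NestVar a r lam := ⟨x₁.k, fun t => merged ⟨2 * t + 1, by omega⟩,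
    hmono.comp fun t t' h => Fin.mk_le_mk.2 (by omega),
    fun i => (hfst.card_filter_even_odd_eq (hcount i)).2.symm⟩
  refine ⟨y₁, y₂, rfl, rfl, fun _ => rfl, fun _ => rfl, X_mul_X_sub_X_mul_X_mem_toricIdeal K ?_⟩
  calc x₁.val m + x₂.val m
      = ((x₁.pairs + x₂.pairs).map fun p => blockEmb μ p.1 (m p.1 p.2)).sum := by
        rw [x₁.val_eq_sum_map_pairs, x₂.val_eq_sum_map_pairs, Multiset.map_add, Multiset.sum_add]
    _ = ∑ u, blockEmb μ (merged u).1 (m (merged u).1 (merged u).2) := by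
        rw [← hms, Multiset.map_map]
        rfl
    _ = y₁.val m + y₂.val m := Fin.sum_univ_two_mul _
end

section
/- A binomial f in K[x] belongs to the toric ideal I_{A(B_1,...,B_d)} if and only if φ_i(f) ∈ I_{B_i} for all 1 ≤ i ≤ d; moreover if f ∈ I_{A(B_1,...,B_d)} then φ_0(f) ∈ I_A. -/
/-!
A binomial `x^u - x^{u'}` lies in the toric ideal of a family `π` exactly when the two
exponent vectors have the same degree `∑ u_v π_v`. The degree for `A(B_1,…,B_d)` splits into
blocks, one per `B_j`, and block `j` is the `B_j`-degree of `φ_j(x^u)`: the toric map of `B_j`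
after `φ_j` sends `x_v` to the block-`j` part of the monomial of `x_v`. For `φ_0`, the
hyperplane `w_j · b = 1` of `B_j`, applied to block `j` of the monomial of `x^{(k)}_{…}`,
counts the factors taken from `B_j`, i.e. returns `a_{kj}`; so equal `A(B_1,…,B_d)`-degrees
give equal `A`-degrees.
-/

open scoped BigOperators

/-- The map `φ_0 : K[x] → K[y]` sending `x^{(k)}_{…}` to `y_k`. -/
noncomputable def phiZero (K : Type*) [Field K] {n d r : ℕ} {lam : Fin d → ℕ}
    (a : Fin n → Fin d → ℕ) :
    MvPolynomial (NestVar a r lam) K →ₐ[K] MvPolynomial (Fin n) K :=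
  MvPolynomial.aeval (fun v : NestVar a r lam => MvPolynomial.X v.k)

/-- The map `φ_j : K[x] → K[z^{(j)}]` sending `x^{(k)}_{(i_1,j_1)⋯(i_r,j_r)}` to
`∏_{i_ℓ = j} z^{(j)}_{j_ℓ}`. -/
noncomputable def phiBlock (K : Type*) [Field K] {n d r : ℕ} {lam : Fin d → ℕ}
    (a : Fin n → Fin d → ℕ) (j : Fin d) :
    MvPolynomial (NestVar a r lam) K →ₐ[K] MvPolynomial (Fin (lam j)) K :=
  MvPolynomial.aeval (fun v : NestVar a r lam =>
    ∏ t : Fin r, if h : (v.s t).1 = j then MvPolynomial.X (h ▸ (v.s t).2) else 1)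

open MvPolynomial Finset

section Toric

variable {K : Type*} [Field K] {V σ : Type*} [Fintype σ]

theorem mem_toricIdeal_iff (π : V → σ → ℕ) (f : MvPolynomial V K) :
    f ∈ toricIdeal K π ↔ aeval (fun v => ∏ i, (X i : MvPolynomial σ K) ^ π v i) f = 0 :=
  RingHom.mem_ker

theorem aeval_monomial_one {R : Type*} [CommSemiring R] {τ : Type*} (g : V → τ →₀ ℕ)
    (u : V →₀ ℕ) :
    aeval (fun v => monomial (g v) (1 : R)) (monomial u (1 : R)) =
      monomial (Finsupp.linearCombination ℕ g u) 1 := by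
  simp only [aeval_monomial, map_one, one_mul, Finsupp.prod, monomial_pow, one_pow,
    ← monomial_sum_one, Finsupp.linearCombination_apply, Finsupp.sum]

theorem prod_X_pow_eq_monomial_equivFunOnFinite {R : Type*} [CommSemiring R] (w : σ → ℕ) :
    ∏ i, (X i : MvPolynomial σ R) ^ w i = monomial (Finsupp.equivFunOnFinite.symm w) 1 := by
  rw [← prod_X_pow_eq_monomial]
  exact (prod_subset (subset_univ _) fun i _ hi => by simp_all).symm

theorem monomial_sub_monomial_mem_toricIdeal_iff (π : V → σ → ℕ) (u u' : V →₀ ℕ) :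
    monomial u (1 : K) - monomial u' 1 ∈ toricIdeal K π ↔
      Finsupp.linearCombination ℕ π u = Finsupp.linearCombination ℕ π u' := by
  have hE : ∀ w : V →₀ ℕ,
      Finsupp.linearCombination ℕ (fun v => Finsupp.equivFunOnFinite.symm (π v)) w =
        Finsupp.equivFunOnFinite.symm (Finsupp.linearCombination ℕ π w) := fun w =>
    (Finsupp.apply_linearCombination ℕ
      (Finsupp.linearEquivFunOnFinite ℕ ℕ σ).symm.toLinearMap _ w).symm
  rw [mem_toricIdeal_iff, _root_.funext fun v => prod_X_pow_eq_monomial_equivFunOnFinite (π v),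
    map_sub, sub_eq_zero, aeval_monomial_one, aeval_monomial_one, hE, hE,
    (monomial_left_injective one_ne_zero).eq_iff, Finsupp.equivFunOnFinite.symm.injective.eq_iff]

theorem mem_toricIdeal_iff_of_comp {W τ : Type*} [Fintype τ] (π : V → τ → ℕ) (ρ : W → τ → ℕ)
    (ψ : MvPolynomial V K →ₐ[K] MvPolynomial W K)
    (hψ : (aeval fun w => ∏ i, (X i : MvPolynomial τ K) ^ ρ w i).comp ψ =
      aeval fun v => ∏ i, (X i : MvPolynomial τ K) ^ π v i)
    (f : MvPolynomial V K) :
    ψ f ∈ toricIdeal K ρ ↔ f ∈ toricIdeal K π := by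
  rw [mem_toricIdeal_iff, mem_toricIdeal_iff, ← hψ, AlgHom.comp_apply]

theorem monomial_sub_monomial_mem_toricIdeal_sigma_iff {ι : Type*} [Fintype ι] {τ : ι → Type*}
    [∀ j, Fintype (τ j)] (π : V → (Σ j, τ j) → ℕ) (u u' : V →₀ ℕ) :
    monomial u (1 : K) - monomial u' 1 ∈ toricIdeal K π ↔
      ∀ j, monomial u (1 : K) - monomial u' 1 ∈ toricIdeal K fun v q => π v ⟨j, q⟩ := by
  have hblock : ∀ j (w : V →₀ ℕ), Finsupp.linearCombination ℕ (fun v q => π v ⟨j, q⟩) w =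
      fun q => Finsupp.linearCombination ℕ π w ⟨j, q⟩ := fun j w =>
    (Finsupp.apply_linearCombination ℕ (LinearMap.funLeft ℕ ℕ (Sigma.mk j)) π w).symm
  simp only [monomial_sub_monomial_mem_toricIdeal_iff, hblock, funext_iff, Sigma.forall]

theorem monomial_sub_monomial_mem_toricIdeal_of_comp {τ : Type*} [Fintype τ] {P : Type*}
    [AddCommMonoid P] (π : V → σ → ℕ) (ρ : V → τ → ℕ) (L : (σ → ℕ) →+ P)
    (C : (τ → ℕ) →+ P) (hC : Function.Injective C) (hπ : ∀ v, L (π v) = C (ρ v)) (u u' : V →₀ ℕ)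
    (h : monomial u (1 : K) - monomial u' 1 ∈ toricIdeal K π) :
    monomial u (1 : K) - monomial u' 1 ∈ toricIdeal K ρ := by
  have hmap : ∀ w : V →₀ ℕ,
      L (Finsupp.linearCombination ℕ π w) = C (Finsupp.linearCombination ℕ ρ w) := fun w => by
    rw [← AddMonoidHom.coe_toNatLinearMap, Finsupp.apply_linearCombination,
      ← AddMonoidHom.coe_toNatLinearMap C, Finsupp.apply_linearCombination]
    exact congrArg (Finsupp.linearCombination ℕ · w) (funext hπ)
  rw [monomial_sub_monomial_mem_toricIdeal_iff] at h ⊢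
  exact hC (by rw [← hmap, ← hmap, h])

end Toric

section Nested

variable {K : Type*} [Field K] {n d r : ℕ} {lam μ : Fin d → ℕ} {a : Fin n → Fin d → ℕ}

theorem blockEmb_apply_mk (i j : Fin d) (x : Fin (μ i) → ℕ) (q : Fin (μ j)) :
    blockEmb μ i x ⟨j, q⟩ = if h : j = i then x (h ▸ q) else 0 :=
  rfl

theorem NestVar.val_apply (m : ∀ i : Fin d, Fin (lam i) → Fin (μ i) → ℕ) (v : NestVar a r lam)
    (p : Σ j : Fin d, Fin (μ j)) :
    v.val m p = ∑ t, blockEmb μ (v.s t).1 (m (v.s t).1 (v.s t).2) p :=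
  Finset.sum_apply ..

theorem aeval_comp_phiBlock (m : ∀ i : Fin d, Fin (lam i) → Fin (μ i) → ℕ) (j : Fin d) :
    (aeval fun q => ∏ q', (X q' : MvPolynomial (Fin (μ j)) K) ^ m j q q').comp
        (phiBlock K a j (r := r)) =
      aeval fun v : NestVar a r lam =>
        ∏ q', (X q' : MvPolynomial (Fin (μ j)) K) ^ v.val m ⟨j, q'⟩ := by
  refine algHom_ext fun v => ?_
  simp only [AlgHom.comp_apply, phiBlock, aeval_X, map_prod, NestVar.val_apply,
    ← prod_pow_eq_pow_sum]
  rw [prod_comm]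
  refine prod_congr rfl fun t _ => ?_
  obtain ⟨i, q⟩ := v.s t
  rcases eq_or_ne i j with rfl | hij
  · simp [blockEmb_apply_mk]
  · simp [blockEmb_apply_mk, hij, hij.symm]

theorem aeval_comp_phiZero :
    (aeval fun k => ∏ i, (X i : MvPolynomial (Fin d) K) ^ a k i).comp
        (phiZero K a (r := r) (lam := lam)) =
      aeval fun v : NestVar a r lam => ∏ i, (X i : MvPolynomial (Fin d) K) ^ a v.k i :=
  algHom_ext fun v => by simp [phiZero]

theorem NestVar.sum_mul_val_eq (m : ∀ i : Fin d, Fin (lam i) → Fin (μ i) → ℕ) {i : Fin d}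
    (w : Fin (μ i) → ℚ) (hw : ∀ q, ∑ q', w q' * (m i q q' : ℚ) = 1) (v : NestVar a r lam) :
    ∑ q', w q' * (v.val m ⟨i, q'⟩ : ℚ) = a v.k i := by
  have hterm : ∀ p : Σ i : Fin d, Fin (lam i),
      ∑ q', w q' * (blockEmb μ p.1 (m p.1 p.2) ⟨i, q'⟩ : ℚ) = if p.1 = i then 1 else 0 := by
    rintro ⟨i', q⟩
    rcases eq_or_ne i' i with rfl | hi
    · simpa [blockEmb_apply_mk] using hw q
    · simp [blockEmb_apply_mk, hi, hi.symm]
  simp only [NestVar.val_apply, Nat.cast_sum, mul_sum]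
  rw [sum_comm, sum_congr rfl fun t _ => hterm (v.s t), sum_boole, v.count i]

end Nested

theorem binomial_in_nested_iff_general (K : Type*) [Field K] {n d r : ℕ} {lam μ : Fin d → ℕ}
    (a : Fin n → Fin d → ℕ) (m : ∀ i : Fin d, Fin (lam i) → Fin (μ i) → ℕ)
    (hB : ∀ i, IsConfiguration (Set.range (m i)))
    (u u' : NestVar a r lam →₀ ℕ)
    (f : MvPolynomial (NestVar a r lam) K)
    (hf : f = MvPolynomial.monomial u 1 - MvPolynomial.monomial u' 1) :
    (f ∈ toricIdeal K (NestVar.val m) ↔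
      ∀ j : Fin d, phiBlock K a j f ∈ toricIdeal K (m j)) ∧
    (f ∈ toricIdeal K (NestVar.val m) → phiZero K a f ∈ toricIdeal K a) := by
  subst hf
  refine ⟨?_, fun h => ?_⟩
  · simp only [mem_toricIdeal_iff_of_comp _ _ _ (aeval_comp_phiBlock m _)]
    exact monomial_sub_monomial_mem_toricIdeal_sigma_iff _ u u'
  choose w hw using fun i => (hB i).2
  let L : ((Σ j, Fin (μ j)) → ℕ) →+ (Fin d → ℚ) :=
    AddMonoidHom.mk' (fun x i => ∑ q', w i q' * (x ⟨i, q'⟩ : ℚ)) fun x y => by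
      ext i
      simp [mul_add, sum_add_distrib]
  rw [mem_toricIdeal_iff_of_comp _ _ _ aeval_comp_phiZero]
  refine monomial_sub_monomial_mem_toricIdeal_of_comp _ _ L
    ((Nat.castAddMonoidHom ℚ).compLeft (Fin d)) (Nat.cast_injective.comp_left)
    (fun v => funext fun i => ?_) u u' h
  exact NestVar.sum_mul_val_eq m (w i) (fun q => hw i _ ⟨q, rfl⟩) v

/-- a binomial `f` of the presentation ring belongs to the toric ideal
`I_{A(B_1,…,B_d)}` if and only if `φ_j(f) ∈ I_{B_j}` for all `j`; moreover if
`f ∈ I_{A(B_1,…,B_d)}` then `φ_0(f) ∈ I_A`. -/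
theorem binomial_in_nested_iff (K : Type*) [Field K] {n d r : ℕ} {lam μ : Fin d → ℕ}
    (a : Fin n → Fin d → ℕ) (m : ∀ i : Fin d, Fin (lam i) → Fin (μ i) → ℕ)
    (hA : IsConfiguration (Set.range a))
    (hdeg : ∀ k, ∑ i, a k i = r)
    (hB : ∀ i, IsConfiguration (Set.range (m i)))
    (u u' : NestVar a r lam →₀ ℕ)
    (f : MvPolynomial (NestVar a r lam) K)
    (hf : f = MvPolynomial.monomial u 1 - MvPolynomial.monomial u' 1) :
    (f ∈ toricIdeal K (NestVar.val m) ↔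
      ∀ j : Fin d, phiBlock K a j f ∈ toricIdeal K (m j)) ∧
    (f ∈ toricIdeal K (NestVar.val m) → phiZero K a f ∈ toricIdeal K a) :=
  binomial_in_nested_iff_general K a m hB u u' f hf
end
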